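/- arXiv:1405.3340 — 3 statements merged into one kernel-verified Lean document; each statement's English description precedes it below -/
import Mathlib

section
/- Fix t > 0. The map μ ↦ E₁(μ,t) is differentiable on ℝ and its derivative at every μ equals the conditional variance Var₁(μ,t) = M₁(μ,t) − E₁(μ,t)²; in particular this derivative is nonnegative, so μ ↦ E₁(μ,t) is monotone nondecreasing. (Lemma 2 of the paper, case i = 1.) -/
open MeasureTheory

/-- Standard Gaussian density `φ(x) = (2π)^{-1/2} exp(-x²/2)`. -/
noncomputable def gpdf (x : ℝ) : ℝ := (Real.sqrt (2 * Real.pi))⁻¹ * Real.exp (-x ^ 2 / 2)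

/-- Standard Gaussian CDF `Φ(x)`. -/
noncomputable def gcdf (x : ℝ) : ℝ := ∫ t in Set.Iic x, gpdf t

/-- Normalizing constant `Z₁(μ,t) = 1 - Φ(t-μ) + Φ(-t-μ)`. -/
noncomputable def Z1 (μ t : ℝ) : ℝ := 1 - gcdf (t - μ) + gcdf (-t - μ)

/-- Mean of `N(μ,1)` conditioned on the two-sided tail `(-∞,-t] ∪ [t,∞)`. -/
noncomputable def E1 (μ t : ℝ) : ℝ :=
  (Z1 μ t)⁻¹ * ∫ x in {x : ℝ | t ≤ |x|}, x * gpdf (x - μ)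

/-- Second moment of `N(μ,1)` conditioned on the two-sided tail `(-∞,-t] ∪ [t,∞)`. -/
noncomputable def M1 (μ t : ℝ) : ℝ :=
  (Z1 μ t)⁻¹ * ∫ x in {x : ℝ | t ≤ |x|}, x ^ 2 * gpdf (x - μ)

/-! Write `N_n(μ) = gaussMoment S n μ = ∫_S x^n φ(x - μ) dx` for `S = {|x| ≥ t}`. Since
`∂_μ φ(x - μ) = (x - μ) φ(x - μ)`, differentiating under the integral sign (dominated near `μ`
by a polynomial times a wider Gaussian) gives `N_n' = N_{n+1} - μ N_n`, and the quotient rule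
turns `(N_1 / N_0)'` into `N_2 / N_0 - (N_1 / N_0)²`. This is nonnegative because
`l ↦ ∫_S (l - x)² φ(x - μ) dx = N_0 l² - 2 N_1 l + N_2` is a nonnegative quadratic, so its
discriminant is `≤ 0`. Finally `N_0 = Z₁ > 0` as `S` has positive measure. -/

open ProbabilityTheory Set Filter

lemma gpdf_pos (x : ℝ) : 0 < gpdf x := by
  unfold gpdf; positivity

lemma gpdf_sub_eq_gaussianPDFReal (x μ : ℝ) : gpdf (x - μ) = gaussianPDFReal μ 1 x := by
  simp [gpdf, gaussianPDFReal]

lemma integrable_pow_mul_gaussianPDFReal (n : ℕ) (μ : ℝ) (v : NNReal) :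
    Integrable fun x : ℝ => x ^ n * gaussianPDFReal μ v x := by
  rcases eq_or_ne v 0 with rfl | hv
  · simp
  have h : Integrable (fun x : ℝ => x ^ n) (gaussianReal μ v) :=
    (memLp_id_gaussianReal (μ := μ) (v := v) n).integrable_norm_pow'.mono' (by fun_prop)
      (ae_of_all _ fun x => by simp [norm_pow])
  rw [gaussianReal_of_var_ne_zero _ hv, integrable_withDensity_iff_integrable_smul'
    (measurable_gaussianPDF μ v) (ae_of_all _ fun _ => gaussianPDF_lt_top)] at h
  simpa [toReal_gaussianPDF, mul_comm] using h

lemma integrable_pow_mul_gpdf_sub (n : ℕ) (μ : ℝ) :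
    Integrable fun x : ℝ => x ^ n * gpdf (x - μ) := by
  simpa only [gpdf_sub_eq_gaussianPDFReal] using integrable_pow_mul_gaussianPDFReal n μ 1

lemma hasDerivAt_gpdf_sub (x m : ℝ) :
    HasDerivAt (fun m : ℝ => gpdf (x - m)) ((x - m) * gpdf (x - m)) m := by
  have h : HasDerivAt (fun m : ℝ => -(x - m) ^ 2 / 2) (x - m) m := by
    simpa using (((hasDerivAt_id m).const_sub x).fun_pow 2).neg.div_const 2
  refine (h.exp.const_mul (Real.sqrt (2 * Real.pi))⁻¹).congr_deriv ?_
  simp only [gpdf]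
  ring

-- From `(x - μ)² ≤ 2 (x - m)² + 2 (m - μ)²`.
lemma gpdf_sub_le {x m μ : ℝ} (hm : |m - μ| ≤ 1) :
    gpdf (x - m) ≤ Real.sqrt 2 * Real.exp (1 / 2) * gaussianPDFReal μ 2 x := by
  have hsq : -(x - m) ^ 2 / 2 ≤ 1 / 2 + -(x - μ) ^ 2 / (2 * 2) := by
    nlinarith [sq_nonneg (x - m - (m - μ)), sq_abs (m - μ), abs_nonneg (m - μ)]
  have hsqrt : Real.sqrt (2 * Real.pi * 2) = Real.sqrt 2 * Real.sqrt (2 * Real.pi) := by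
    rw [mul_comm, Real.sqrt_mul zero_le_two]
  calc gpdf (x - m) ≤ (Real.sqrt (2 * Real.pi))⁻¹ * Real.exp (1 / 2 + -(x - μ) ^ 2 / (2 * 2)) :=
        mul_le_mul_of_nonneg_left (Real.exp_le_exp.2 hsq) (by positivity)
    _ = Real.sqrt 2 * Real.exp (1 / 2) * gaussianPDFReal μ 2 x := by
        rw [gaussianPDFReal, Real.exp_add, NNReal.coe_ofNat, hsqrt]
        field_simp

noncomputable def gaussMoment (s : Set ℝ) (n : ℕ) (μ : ℝ) : ℝ := ∫ x in s, x ^ n * gpdf (x - μ)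

lemma hasDerivAt_gaussMoment (s : Set ℝ) (n : ℕ) (μ : ℝ) :
    HasDerivAt (gaussMoment s n) (gaussMoment s (n + 1) μ - μ * gaussMoment s n μ) μ := by
  set C := Real.sqrt 2 * Real.exp (1 / 2)
  set F' : ℝ → ℝ → ℝ := fun m x => x ^ (n + 1) * gpdf (x - m) - m * (x ^ n * gpdf (x - m))
  set bound : ℝ → ℝ := fun x =>
    C * (|x ^ (n + 1) * gaussianPDFReal μ 2 x| + (|μ| + 1) * |x ^ n * gaussianPDFReal μ 2 x|)
  have hF'_eq (m x : ℝ) : F' m x = x ^ n * ((x - m) * gpdf (x - m)) := by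
    simp only [F']; ring
  have h_bound (x : ℝ) (m : ℝ) (hm : m ∈ Metric.ball μ 1) : ‖F' m x‖ ≤ bound x := by
    rw [Metric.mem_ball, Real.dist_eq] at hm
    have hxm : |x - m| ≤ |x| + (|μ| + 1) := by
      calc |x - m| = |x - μ - (m - μ)| := by ring_nf
        _ ≤ |x| + |μ| + |m - μ| := (abs_sub _ _).trans (by gcongr; exact abs_sub _ _)
        _ ≤ |x| + (|μ| + 1) := by linarith
    calc ‖F' m x‖ = |x| ^ n * |x - m| * gpdf (x - m) := by
          rw [hF'_eq, Real.norm_eq_abs, abs_mul, abs_mul, abs_pow, abs_of_pos (gpdf_pos _),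
            mul_assoc]
      _ ≤ |x| ^ n * (|x| + (|μ| + 1)) * (C * gaussianPDFReal μ 2 x) := by
          gcongr
          · exact (gpdf_pos _).le
          · exact gpdf_sub_le hm.le
      _ = bound x := by
          simp only [bound, abs_mul, abs_pow, abs_of_nonneg (gaussianPDFReal_nonneg μ 2 x)]
          ring
  have bound_integrable : Integrable bound :=
    (((integrable_pow_mul_gaussianPDFReal (n + 1) μ 2).abs.add
      ((integrable_pow_mul_gaussianPDFReal n μ 2).abs.const_mul _)).const_mul C)
  obtain ⟨-, h⟩ := hasDerivAt_integral_of_dominated_loc_of_deriv_le (μ := volume.restrict s)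
    (F := fun m x => x ^ n * gpdf (x - m)) (F' := F') (bound := bound)
    (Metric.ball_mem_nhds μ one_pos)
    (Eventually.of_forall fun m => (integrable_pow_mul_gpdf_sub n m).integrableOn.1)
    (integrable_pow_mul_gpdf_sub n μ).integrableOn
    (((integrable_pow_mul_gpdf_sub (n + 1) μ).sub
      ((integrable_pow_mul_gpdf_sub n μ).const_mul μ)).integrableOn.1)
    (ae_of_all _ h_bound) bound_integrable.integrableOn
    (ae_of_all _ fun x m _ => by
      rw [hF'_eq]; exact (hasDerivAt_gpdf_sub x m).const_mul (x ^ n))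
  refine h.congr_deriv ?_
  rw [integral_sub (integrable_pow_mul_gpdf_sub (n + 1) μ).integrableOn
    ((integrable_pow_mul_gpdf_sub n μ).const_mul μ).integrableOn, integral_const_mul]
  rfl

noncomputable def condMoment (s : Set ℝ) (n : ℕ) (μ : ℝ) : ℝ :=
  gaussMoment s n μ / gaussMoment s 0 μ

lemma gaussMoment_zero_pos {s : Set ℝ} (hs : volume s ≠ 0) (μ : ℝ) : 0 < gaussMoment s 0 μ := by
  have hsupp : Function.support (fun x : ℝ => x ^ 0 * gpdf (x - μ)) = univ := by
    ext x; simp [(gpdf_pos _).ne']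
  rw [gaussMoment, integral_pos_iff_support_of_nonneg (fun x => by simp [(gpdf_pos _).le])
    (integrable_pow_mul_gpdf_sub 0 μ).integrableOn, hsupp, Measure.restrict_apply_univ]
  exact pos_iff_ne_zero.2 hs

lemma gaussMoment_quadratic_nonneg (s : Set ℝ) (μ l : ℝ) :
    0 ≤ gaussMoment s 0 μ * (l * l) + -2 * gaussMoment s 1 μ * l + gaussMoment s 2 μ := by
  have hexpand : (fun x : ℝ => (l - x) ^ 2 * gpdf (x - μ)) = fun x =>
      l * l * (x ^ 0 * gpdf (x - μ)) + -2 * l * (x ^ 1 * gpdf (x - μ)) + x ^ 2 * gpdf (x - μ) := by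
    ext x; ring
  have hint (n : ℕ) := (integrable_pow_mul_gpdf_sub n μ).integrableOn (s := s)
  have h : 0 ≤ ∫ x in s, (l - x) ^ 2 * gpdf (x - μ) :=
    integral_nonneg fun x => mul_nonneg (sq_nonneg _) (gpdf_pos _).le
  rw [hexpand, integral_add (((hint 0).const_mul _).fun_add ((hint 1).const_mul _)) (hint 2),
    integral_add ((hint 0).const_mul _) ((hint 1).const_mul _), integral_const_mul,
    integral_const_mul] at h
  simp only [gaussMoment]
  linarith

lemma sq_gaussMoment_one_le (s : Set ℝ) (μ : ℝ) :
    gaussMoment s 1 μ ^ 2 ≤ gaussMoment s 0 μ * gaussMoment s 2 μ := by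
  have h := discrim_le_zero (gaussMoment_quadratic_nonneg s μ)
  rw [discrim] at h
  linarith

lemma condMoment_two_sub_sq_nonneg (s : Set ℝ) (μ : ℝ) :
    0 ≤ condMoment s 2 μ - condMoment s 1 μ ^ 2 := by
  have h : condMoment s 2 μ - condMoment s 1 μ ^ 2 =
      (gaussMoment s 0 μ * gaussMoment s 2 μ - gaussMoment s 1 μ ^ 2) / gaussMoment s 0 μ ^ 2 := by
    rcases eq_or_ne (gaussMoment s 0 μ) 0 with h0 | h0
    · simp [condMoment, h0]
    · simp only [condMoment]
      field_simp
  rw [h]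
  exact div_nonneg (sub_nonneg.2 (sq_gaussMoment_one_le s μ)) (sq_nonneg _)

lemma hasDerivAt_condMoment_one {s : Set ℝ} {μ : ℝ} (h : gaussMoment s 0 μ ≠ 0) :
    HasDerivAt (condMoment s 1) (condMoment s 2 μ - condMoment s 1 μ ^ 2) μ := by
  refine ((hasDerivAt_gaussMoment s 1 μ).div (hasDerivAt_gaussMoment s 0 μ) h).congr_deriv ?_
  simp only [condMoment]
  field_simp
  ring

lemma setIntegral_Iic_gpdf_sub (a μ : ℝ) : ∫ x in Iic a, gpdf (x - μ) = gcdf (a - μ) := by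
  rw [gcdf, ← (measurePreserving_sub_right volume μ).setIntegral_preimage_emb
    (measurableEmbedding_subRight μ) gpdf (Iic (a - μ))]
  congr 2
  ext x
  simp

lemma Z1_eq_gaussMoment {t : ℝ} (ht : 0 < t) (μ : ℝ) : Z1 μ t = gaussMoment {x | t ≤ |x|} 0 μ := by
  have hint : Integrable fun x : ℝ => gpdf (x - μ) := by
    simpa using integrable_pow_mul_gpdf_sub 0 μ
  have htotal : ∫ x, gpdf (x - μ) = 1 := by
    simp_rw [gpdf_sub_eq_gaussianPDFReal]
    exact integral_gaussianPDFReal_eq_one μ one_ne_zero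
  have hIci : ∫ x in Ici t, gpdf (x - μ) = 1 - gcdf (t - μ) := by
    rw [← htotal, ← setIntegral_Iic_gpdf_sub, ← intervalIntegral.integral_Iic_add_Ioi
      hint.integrableOn hint.integrableOn, integral_Ici_eq_integral_Ioi]
    ring
  have htail : {x : ℝ | t ≤ |x|} = Iic (-t) ∪ Ici t := by
    ext x
    simp only [mem_ofPred_eq, mem_union, mem_Iic, mem_Ici, le_abs, le_neg]
    tauto
  have hdisj : Disjoint (Iic (-t)) (Ici t) := Iic_disjoint_Ici.2 (by linarith)
  simp only [gaussMoment, pow_zero, one_mul]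
  rw [htail, setIntegral_union hdisj measurableSet_Ici hint.integrableOn hint.integrableOn,
    setIntegral_Iic_gpdf_sub, hIci, Z1]
  ring

lemma E1_eq_condMoment {t : ℝ} (ht : 0 < t) (μ : ℝ) : E1 μ t = condMoment {x | t ≤ |x|} 1 μ := by
  simp only [E1, condMoment, gaussMoment, Z1_eq_gaussMoment ht, pow_one, div_eq_inv_mul]

lemma M1_eq_condMoment {t : ℝ} (ht : 0 < t) (μ : ℝ) : M1 μ t = condMoment {x | t ≤ |x|} 2 μ := by
  rw [M1, condMoment, Z1_eq_gaussMoment ht, div_eq_inv_mul]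
  rfl

/-- Lemma 2 of the paper (case i = 1): for fixed `t > 0`, the truncated Gaussian mean
`μ ↦ E₁(μ,t)` is differentiable with derivative the conditional variance
`Var₁(μ,t) = M₁(μ,t) - E₁(μ,t)²`, which is nonnegative; hence `μ ↦ E₁(μ,t)` is
monotone nondecreasing. -/
theorem truncGaussTail_mean_hasDerivAt_variance (t : ℝ) (ht : 0 < t) :
    (∀ μ : ℝ, HasDerivAt (fun m : ℝ => E1 m t) (M1 μ t - (E1 μ t) ^ 2) μ) ∧
    (∀ μ : ℝ, 0 ≤ M1 μ t - (E1 μ t) ^ 2) ∧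
    Monotone (fun μ : ℝ => E1 μ t) := by
  set S := {x : ℝ | t ≤ |x|}
  have hS : volume S ≠ 0 := by
    refine ne_bot_of_le_ne_bot (by simp) (measure_mono (s := Ici t) fun x hx => ?_)
    exact le_trans hx (le_abs_self x)
  have hE : (fun m => E1 m t) = condMoment S 1 := funext (E1_eq_condMoment ht)
  have hvar (μ : ℝ) : M1 μ t - E1 μ t ^ 2 = condMoment S 2 μ - condMoment S 1 μ ^ 2 := by
    rw [M1_eq_condMoment ht, E1_eq_condMoment ht]
  have hderiv (μ : ℝ) : HasDerivAt (fun m => E1 m t) (M1 μ t - E1 μ t ^ 2) μ := by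
    rw [hE, hvar]
    exact hasDerivAt_condMoment_one (gaussMoment_zero_pos hS μ).ne'
  have hnonneg (μ : ℝ) : 0 ≤ M1 μ t - E1 μ t ^ 2 := hvar μ ▸ condMoment_two_sub_sq_nonneg S μ
  exact ⟨hderiv, hnonneg, monotone_of_deriv_nonneg (fun μ => (hderiv μ).differentiableAt)
    fun μ => (hderiv μ).deriv ▸ hnonneg μ⟩
end

section
/- (Affine representation of the top-K selection event.) Let n, K ∈ ℕ with K + 1 < n, let y ∈ ℝⁿ have pairwise distinct, nonzero absolute values, let E ⊆ {1,…,n} with |E| = K, let g ∈ {1,…,n} \ E, set H = {1,…,n} \ (E ∪ {g}), and let z_i ∈ {−1, +1} for i ∈ E and z_g ∈ {−1, +1}. Then the following are equivalent: (1) for every i ∈ E, z_i = sign(y_i) and |y_i| > |y_g|; z_g = sign(y_g); and for every i ∈ H, |y_i| ≤ |y_g| (i.e. E is exactly the set of indices of the K largest absolute values of y, g is the index of the (K+1)-st largest, and the z's record the corresponding signs); (2) the affine inequality system holds: for every i ∈ H, y_i − z_g·y_g ≤ 0 and −y_i − z_g·y_g ≤ 0, and for every i ∈ E, −z_i·y_i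 + z_g·y_g < 0. -/
lemma aux_sign_iff (s x : ℝ) (hs : s = 1 ∨ s = -1) (hx : x ≠ 0) :
    s = Real.sign x ↔ s * x = |x| := by
  rcases hx.lt_or_gt with h | h
  · rw [Real.sign_of_neg h, abs_of_neg h]
    rcases hs with rfl | rfl <;> constructor <;> intro h2 <;> nlinarith
  · rw [Real.sign_of_pos h, abs_of_pos h]
    rcases hs with rfl | rfl <;> constructor <;> intro h2 <;> nlinarith

lemma aux_mul_le_abs (s x : ℝ) (hs : s = 1 ∨ s = -1) : s * x ≤ |x| := by
  rcases hs with rfl | rfl <;> simp [neg_le_abs, le_abs_self]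

/-- Affine representation of the top-K selection event: for `y ∈ ℝⁿ` with pairwise
distinct, nonzero absolute values, a candidate selected set `E` of size `K`, a candidate
`(K+1)`-st index `g ∉ E` and candidate signs `z_i, z_g ∈ {±1}`, the event "`E` is exactly
the set of indices of the `K` largest absolute values of `y`, `g` is the index of the
`(K+1)`-st largest, and the signs are correct" holds iff the affine inequality system
`y_i - z_g y_g ≤ 0`, `-y_i - z_g y_g ≤ 0` (for `i ∈ H = {1,…,n} \ (E ∪ {g})`) and
`-z_i y_i + z_g y_g < 0` (for `i ∈ E`) holds. -/
theorem topK_selection_affine_representation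
    (n K : ℕ) (hK : K + 1 < n) (y : Fin n → ℝ)
    (hy0 : ∀ i, y i ≠ 0) (hdist : ∀ i j, i ≠ j → |y i| ≠ |y j|)
    (E : Finset (Fin n)) (hE : E.card = K) (g : Fin n) (hg : g ∉ E)
    (z : Fin n → ℝ) (hz : ∀ i ∈ E, z i = 1 ∨ z i = -1)
    (zg : ℝ) (hzg : zg = 1 ∨ zg = -1) :
    ((∀ i ∈ E, z i = Real.sign (y i) ∧ |y g| < |y i|) ∧
        zg = Real.sign (y g) ∧
        (∀ i, i ∉ E → i ≠ g → |y i| ≤ |y g|))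
      ↔ ((∀ i, i ∉ E → i ≠ g → y i - zg * y g ≤ 0 ∧ -(y i) - zg * y g ≤ 0) ∧
          (∀ i ∈ E, -(z i) * y i + zg * y g < 0)) := by
  constructor
  · rintro ⟨h1, h2, h3⟩
    have hzgy : zg * y g = |y g| := (aux_sign_iff zg (y g) hzg (hy0 g)).mp h2
    constructor
    · intro i hiE hig
      have := h3 i hiE hig
      have h4 := abs_le.mp this
      constructor <;> linarith [le_abs_self (y i), neg_abs_le (y i)]
    · intro i hi
      obtain ⟨hzi, habs⟩ := h1 i hi
      have : z i * y i = |y i| := (aux_sign_iff (z i) (y i) (hz i hi) (hy0 i)).mp hzi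
      nlinarith
  · rintro ⟨h1, h2⟩
    -- find an element of H
    have hcard : (insert g E).card < Fintype.card (Fin n) := by
      simp [Finset.card_insert_of_notMem hg, hE, hK]
    have hne : insert g E ≠ Finset.univ := by
      intro h
      rw [h, Finset.card_univ] at hcard
      exact lt_irrefl _ hcard
    have hex : ∃ i0, i0 ∉ insert g E := by
      by_contra h
      push_neg at h
      exact hne (Finset.eq_univ_iff_forall.mpr h)
    obtain ⟨i0, hi0⟩ := hex
    have hi0E : i0 ∉ E := fun h => hi0 (Finset.mem_insert_of_mem h)
    have hi0g : i0 ≠ g := fun h => hi0 (h ▸ Finset.mem_insert_self g E)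
    obtain ⟨ha, hb⟩ := h1 i0 hi0E hi0g
    have habs0 : |y i0| ≤ zg * y g := abs_le.mpr ⟨by linarith, by linarith⟩
    have hpos : 0 < zg * y g := lt_of_lt_of_le (abs_pos.mpr (hy0 i0)) habs0
    have hle : zg * y g ≤ |y g| := aux_mul_le_abs zg (y g) hzg
    have hzgy : zg * y g = |y g| := by
      rcases hzg with rfl | rfl
      · rw [one_mul] at hpos ⊢; exact (abs_of_pos hpos).symm
      · have : y g < 0 := by nlinarith
        rw [abs_of_neg this]; ring
    refine ⟨?_, (aux_sign_iff zg (y g) hzg (hy0 g)).mpr hzgy, ?_⟩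
    · intro i hi
      have h4 := h2 i hi
      have h5 : |y g| < z i * y i := by nlinarith
      have h6 : z i * y i ≤ |y i| := aux_mul_le_abs (z i) (y i) (hz i hi)
      have h7 : |y g| < |y i| := lt_of_lt_of_le h5 h6
      have h8 : z i * y i = |y i| := by
        rcases hz i hi with hz1 | hz1 <;> rw [hz1] at h5 ⊢
        · rw [one_mul] at h5 ⊢
          have hy : 0 < y i := lt_of_le_of_lt (abs_nonneg (y g)) h5
          exact (abs_of_pos hy).symm
        · have : y i < 0 := by nlinarith [abs_nonneg (y g)]
          rw [abs_of_neg this]; ring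
      exact ⟨(aux_sign_iff (z i) (y i) (hz i hi) (hy0 i)).mpr h8, h7⟩
    · intro i hiE hig
      obtain ⟨ha, hb⟩ := h1 i hiE hig
      rw [← hzgy]
      exact abs_le.mpr ⟨by linarith, by linarith⟩
end

section
/- (Affine representation of the Benjamini–Hochberg selection event.) Let n ∈ ℕ, q ∈ (0,1), and for k = 1,…,n set t_k = Φ^{-1}(1 − qk/(2n)). Let y ∈ ℝⁿ have pairwise distinct, nonzero absolute values and let σ be the permutation of {1,…,n} sorting y by decreasing absolute value: |y_{σ(1)}| > |y_{σ(2)}| > … > |y_{σ(n)}|. Define k̂ as the largest k ∈ {1,…,n} with |y_{σ(k)}| ≥ t_k (and k̂ = 0 if no such k exists). Fix K ∈ {1,…,n−1}, let E = {σ(1),…,σ(K)} and let z_i ∈ {−1,+1} for i ∈ E. Then the following are equivalent: (1) k̂ = K and z_i = sign(y_i) for every i ∈ E (i.e. the BH(q) procedure selects exactly the indices in E, with the given signs); (2) z_i·y_i ≥ t_K for every i ∈ E, and |y_{σ(k)}| < t_k for every k with K < k ≤ n. -/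
open MeasureTheory

/-- Inverse standard Gaussian CDF `Φ⁻¹(p)` (the `p`-quantile of `N(0,1)`). -/
noncomputable def gcdfInv (p : ℝ) : ℝ := sInf {x : ℝ | p ≤ gcdf x}

lemma gpdf_nonneg (x : ℝ) : 0 ≤ gpdf x := by
  unfold gpdf
  positivity

lemma gpdf_eq : gpdf = fun x => (Real.sqrt (2 * Real.pi))⁻¹ * Real.exp (-(1/2) * x ^ 2) := by
  funext x
  unfold gpdf
  ring_nf

lemma integrable_gpdf : Integrable gpdf := by
  rw [gpdf_eq]
  exact (integrable_exp_neg_mul_sq (by norm_num : (0:ℝ) < 1/2)).const_mul _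

lemma integral_gpdf : ∫ x, gpdf x = 1 := by
  rw [gpdf_eq, integral_const_mul, integral_gaussian,
    show Real.pi / (1/2) = 2 * Real.pi by ring]
  exact inv_mul_cancel₀ (ne_of_gt (Real.sqrt_pos.2 (by positivity)))

lemma gpdf_neg (x : ℝ) : gpdf (-x) = gpdf x := by
  unfold gpdf; ring_nf

lemma gcdf_zero : gcdf 0 = 1/2 := by
  have hsym : (∫ x in Set.Iic (0:ℝ), gpdf x) = ∫ x in Set.Ioi (0:ℝ), gpdf x := by
    rw [show (∫ x in Set.Iic (0:ℝ), gpdf x) = ∫ x in Set.Iic (0:ℝ), gpdf (-x) by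
      simp only [gpdf_neg]]
    rw [integral_comp_neg_Iic, neg_zero]
  have htot := intervalIntegral.integral_Iic_add_Ioi (b := (0:ℝ))
    integrable_gpdf.integrableOn integrable_gpdf.integrableOn
  rw [integral_gpdf] at htot
  unfold gcdf
  linarith

lemma gcdf_mono : Monotone gcdf := by
  intro a b hab
  unfold gcdf
  exact setIntegral_mono_set integrable_gpdf.integrableOn
    (Filter.Eventually.of_forall gpdf_nonneg)
    (HasSubset.Subset.eventuallyLE (Set.Iic_subset_Iic.2 hab))

lemma gcdfInv_nonneg {p : ℝ} (hp : 1/2 < p) : 0 ≤ gcdfInv p := by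
  apply Real.sInf_nonneg
  intro x hx
  by_contra h
  push_neg at h
  have h2 := gcdf_mono h.le
  rw [gcdf_zero] at h2
  have : p ≤ gcdf x := hx
  linarith

lemma sign_mul_self_of_ne_zero {x : ℝ} (hx : x ≠ 0) : Real.sign x * x = |x| := by
  rcases hx.lt_or_gt with h | h
  · rw [Real.sign_of_neg h, abs_of_neg h]; ring
  · rw [Real.sign_of_pos h, abs_of_pos h]; ring

/-- Affine representation of the Benjamini–Hochberg selection event. Let
`t_k = Φ⁻¹(1 - qk/(2n))`, let `σ` sort `y` by decreasing absolute value (position `k : Fin n`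
corresponds to the `(k+1)`-st largest absolute value), let `k̂` be the largest (1-based)
`k` with `|y_{σ(k)}| ≥ t_k` (`0` if none), and let `E` consist of the positions of the `K`
largest absolute values, with candidate signs `z_i ∈ {±1}`. Then "`BH(q)` selects exactly
`E`, with correct signs" (i.e. `k̂ = K` and `z_i = sign(y_i)` on `E`) holds iff the affine
system `z_i y_i ≥ t_K` (for `i ∈ E`) and `|y_{σ(k)}| < t_k` (for `K < k ≤ n`) holds. -/
theorem BH_selection_affine_representation
    (n : ℕ) (q : ℝ) (hq : q ∈ Set.Ioo (0 : ℝ) 1)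
    (y : Fin n → ℝ) (hy0 : ∀ i, y i ≠ 0) (hdist : ∀ i j, i ≠ j → |y i| ≠ |y j|)
    (σ : Equiv.Perm (Fin n))
    (hsort : ∀ k l : Fin n, k < l → |y (σ l)| < |y (σ k)|)
    (K : ℕ) (hK1 : 1 ≤ K) (hKn : K < n)
    (E : Finset (Fin n))
    (hE : E = (Finset.univ.filter fun k : Fin n => (k : ℕ) < K).image σ)
    (z : Fin n → ℝ) (hz : ∀ i ∈ E, z i = 1 ∨ z i = -1) :
    (((Finset.univ.filter fun k : Fin n =>
            gcdfInv (1 - q * ((k : ℕ) + 1) / (2 * n)) ≤ |y (σ k)|).sup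
          fun k : Fin n => (k : ℕ) + 1) = K
        ∧ ∀ i ∈ E, z i = Real.sign (y i))
      ↔ ((∀ i ∈ E, gcdfInv (1 - q * K / (2 * n)) ≤ z i * y i) ∧
          ∀ k : Fin n, K < (k : ℕ) + 1 →
            |y (σ k)| < gcdfInv (1 - q * ((k : ℕ) + 1) / (2 * n))) := by
  obtain ⟨hq0, hq1⟩ := hq
  have hn : 0 < n := lt_of_le_of_lt (Nat.zero_le K) hKn
  have hKn' : (K:ℝ) < n := by exact_mod_cast hKn
  have hK1' : (1:ℝ) ≤ (K:ℝ) := by exact_mod_cast hK1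
  have hn' : (0:ℝ) < n := by exact_mod_cast hn
  -- nonnegativity of the threshold t_K
  have htK : (0:ℝ) ≤ gcdfInv (1 - q * K / (2 * n)) := by
    apply gcdfInv_nonneg
    have h2 : q * K / (2*n) < 1/2 := by
      rw [div_lt_iff₀ (by positivity)]
      nlinarith
    linarith
  set S : Finset (Fin n) := Finset.univ.filter fun k : Fin n =>
      gcdfInv (1 - q * ((k : ℕ) + 1) / (2 * n)) ≤ |y (σ k)| with hS
  have hmemE : ∀ i, i ∈ E ↔ ∃ k : Fin n, (k:ℕ) < K ∧ σ k = i := by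
    intro i; subst hE; simp
  have hsort' : ∀ k l : Fin n, k ≤ l → |y (σ l)| ≤ |y (σ k)| := by
    intro k l hkl
    rcases lt_or_eq_of_le hkl with h | h
    · exact (hsort k l h).le
    · rw [h]
  constructor
  · rintro ⟨hsup, hsign⟩
    have hSne : S.Nonempty := by
      by_contra h
      rw [Finset.not_nonempty_iff_eq_empty] at h
      rw [h, Finset.sup_empty] at hsup
      simp at hsup
      omega
    obtain ⟨k₀, hk₀S, hk₀⟩ := Finset.exists_mem_eq_sup S hSne (fun k : Fin n => (k:ℕ) + 1)
    have hk₀K : (k₀:ℕ) + 1 = K := by rw [hsup] at hk₀; omega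
    have hk₀t : gcdfInv (1 - q * K / (2*n)) ≤ |y (σ k₀)| := by
      have hmem := (Finset.mem_filter.1 hk₀S).2
      have hc : ((k₀:ℕ):ℝ) + 1 = (K:ℝ) := by exact_mod_cast hk₀K
      rwa [hc] at hmem
    constructor
    · intro i hi
      obtain ⟨k, hk, rfl⟩ := (hmemE i).1 hi
      have h1 : z (σ k) * y (σ k) = |y (σ k)| := by
        rw [hsign _ hi]
        exact sign_mul_self_of_ne_zero (hy0 _)
      have hkk₀ : k ≤ k₀ := by
        rw [Fin.le_def]; omega
      rw [h1]
      exact le_trans hk₀t (hsort' k k₀ hkk₀)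
    · intro k hkK
      by_contra h
      push_neg at h
      have hkS : k ∈ S := Finset.mem_filter.2 ⟨Finset.mem_univ _, h⟩
      have h4 := Finset.le_sup (f := fun k : Fin n => (k:ℕ)+1) hkS
      rw [hsup] at h4
      omega
  · rintro ⟨ha, hb⟩
    have hsign : ∀ i ∈ E, z i = Real.sign (y i) := by
      intro i hi
      have h1 := ha i hi
      have hne : z i * y i ≠ 0 := by
        rcases hz i hi with hzi | hzi <;> simp [hzi, hy0 i]
      have hpos : 0 < z i * y i := (htK.trans h1).lt_of_ne (Ne.symm hne)
      rcases hz i hi with hzi | hzi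
      · rw [hzi, one_mul] at hpos
        rw [hzi, Real.sign_of_pos hpos]
      · rw [hzi, neg_one_mul, neg_pos] at hpos
        rw [hzi, Real.sign_of_neg hpos]
    have habs : ∀ i ∈ E, z i * y i = |y i| := by
      intro i hi
      rw [hsign i hi]
      exact sign_mul_self_of_ne_zero (hy0 i)
    refine ⟨?_, hsign⟩
    have hle : ∀ k ∈ S, (k:ℕ) + 1 ≤ K := by
      intro k hk
      by_contra h
      push_neg at h
      exact absurd (Finset.mem_filter.1 hk).2 (not_le.2 (hb k h))
    set k₀ : Fin n := ⟨K - 1, by omega⟩ with hk₀def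
    have hk₀E : σ k₀ ∈ E := (hmemE (σ k₀)).2 ⟨k₀, by simp [hk₀def]; omega, rfl⟩
    have hk₀S : k₀ ∈ S := by
      refine Finset.mem_filter.2 ⟨Finset.mem_univ _, ?_⟩
      have hc : ((k₀:ℕ):ℝ) + 1 = (K:ℝ) := by
        have : (k₀:ℕ) + 1 = K := by simp [hk₀def]; omega
        exact_mod_cast this
      rw [hc, ← habs _ hk₀E]
      exact ha _ hk₀E
    have h1 := Finset.le_sup (f := fun k : Fin n => (k:ℕ)+1) hk₀S
    have h2 := Finset.sup_le hle
    have h3 : (k₀:ℕ) + 1 = K := by simp [hk₀def]; omega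
    omega
end
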